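/- Let P ⊂ ℝ² be a convex polygon. There exists a constant C such that for all non-negative continuous convex functions f on P, the L² norm of f over P is bounded by C times the integral of f over the boundary ∂P with respect to arc-length-type boundary measure: ‖f‖_{L²(P)} ≤ C ∫_{∂P} f dσ. -/

import Mathlib

/-!
Every point `p` of a superlevel set `{f > t}` of a convex function on a compact convex `P ⊆ ℝ²`
is dominated by a boundary point on the vertical line through `p` and by one on the horizontal
line. Hence `{f > t}` lies in the product of the two coordinate projections of
`T = {f > t} ∩ ∂P`, and its area is at most `σ(T)²`. Combined with Chebyshev's bound
`t σ{f > t} ≤ ∫_{∂P} f dσ`, the layer cake formula gives `∫_P f² ≤ 2 (∫_{∂P} f dσ)²`.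
A polygon has finite perimeter since its boundary is covered by the segments between vertices.
-/

open MeasureTheory Set Topology
open scoped ENNReal

section ConvexHullFrontier

variable {E : Type*} [NormedAddCommGroup E] [NormedSpace ℝ E] [FiniteDimensional ℝ E]

/-- Carathéodory on the boundary: a full simplex of `finrank + 1` points around `x` would put `x`
in the interior. -/
theorem exists_finset_card_le_finrank_of_notMem_interior_convexHull {s : Set E} {x : E}
    (hx : x ∈ convexHull ℝ s) (hxi : x ∉ interior (convexHull ℝ s)) :
    ∃ t : Finset E, ↑t ⊆ s ∧ t.card ≤ Module.finrank ℝ E ∧ x ∈ convexHull ℝ (t : Set E) := by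
  classical
  obtain ⟨ι, _, z, w, hzs, hind, hwpos, hwsum, rfl⟩ := eq_pos_convex_span_of_mem_convexHull hx
  have hcard : Fintype.card ι ≠ Module.finrank ℝ E + 1 := by
    intro hcard
    let b : AffineBasis ι ℝ E :=
      ⟨z, hind, hind.affineSpan_eq_top_iff_card_eq_finrank_add_one.mpr hcard⟩
    have hx_comb : ∑ j, w j • z j = Finset.univ.affineCombination ℝ b w :=
      (Finset.affineCombination_eq_linear_combination _ _ _ hwsum).symm
    have hcoord : ∀ i, 0 < b.coord i (∑ j, w j • z j) := fun i => by
      rw [hx_comb, b.coord_apply_combination_of_mem (Finset.mem_univ i) hwsum]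
      exact hwpos i
    exact hxi <| interior_mono (convexHull_mono hzs) (b.interior_convexHull ▸ hcoord)
  have hle : Fintype.card ι ≤ Module.finrank ℝ E + 1 :=
    hind.card_le_finrank_succ.trans (by simpa using Submodule.finrank_le (vectorSpan ℝ (range z)))
  have himage : (Finset.univ.image z).card ≤ Module.finrank ℝ E :=
    (Finset.card_image_le.trans_eq (Finset.card_univ (α := ι))).trans (by omega)
  refine ⟨Finset.univ.image z, by simpa using hzs, himage, ?_⟩
  exact (convex_convexHull ℝ _).sum_mem (fun i _ => (hwpos i).le) hwsum
    fun i _ => subset_convexHull ℝ _ (by simp)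

theorem frontier_convexHull_subset_biUnion_segment (hE : Module.finrank ℝ E = 2)
    {V : Finset E} :
    frontier (convexHull ℝ (V : Set E)) ⊆ ⋃ u ∈ V, ⋃ v ∈ V, segment ℝ u v := by
  classical
  intro x hx
  have hxP : x ∈ convexHull ℝ (V : Set E) :=
    (V.finite_toSet.isClosed_convexHull ℝ).frontier_subset hx
  obtain ⟨t, htV, htcard, hxt⟩ :=
    exists_finset_card_le_finrank_of_notMem_interior_convexHull hxP hx.2
  simp only [mem_iUnion]
  obtain h | h | h : t.card = 0 ∨ t.card = 1 ∨ t.card = 2 := by omega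
  · simp [Finset.card_eq_zero.mp h] at hxt
  · obtain ⟨u, rfl⟩ := Finset.card_eq_one.mp h
    simp only [Finset.coe_singleton, convexHull_singleton, mem_singleton_iff] at hxt
    subst hxt
    exact ⟨x, htV (by simp), x, htV (by simp), left_mem_segment ℝ x x⟩
  · obtain ⟨u, v, -, rfl⟩ := Finset.card_eq_two.mp h
    rw [Finset.coe_pair, convexHull_pair] at hxt
    exact ⟨u, htV (by simp), v, htV (by simp), hxt⟩

theorem hausdorffMeasure_frontier_convexHull_lt_top [MeasurableSpace E] [BorelSpace E]
    (hE : Module.finrank ℝ E = 2) (V : Finset E) :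
    μH[1] (frontier (convexHull ℝ (V : Set E))) < ∞ := by
  refine (measure_mono (frontier_convexHull_subset_biUnion_segment hE)).trans_lt ?_
  refine measure_biUnion_lt_top V.finite_toSet fun u _ => ?_
  refine measure_biUnion_lt_top V.finite_toSet fun v _ => ?_
  simp [edist_lt_top]

end ConvexHullFrontier

theorem ConvexOn.exists_add_smul_mem_frontier_le {E : Type*} [NormedAddCommGroup E]
    [NormedSpace ℝ E] {P : Set E} {f : E → ℝ} (hP : IsCompact P) (hf : ConvexOn ℝ P f)
    {x : E} (hx : x ∈ P) {v : E} (hv : v ≠ 0) :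
    ∃ t : ℝ, x + t • v ∈ frontier P ∧ f x ≤ f (x + t • v) := by
  let g : ℝ →ᵃ[ℝ] E := AffineMap.lineMap x (x + v)
  have hg : ∀ t, g t = x + t • v := fun t => by
    simp [g, AffineMap.lineMap_apply_module', add_comm]
  have hgc : IsClosedEmbedding g := by
    have : (g : ℝ → E) = (x + ·) ∘ (· • v) := funext fun t => hg t
    rw [this]
    exact (Homeomorph.addLeft x).isClosedEmbedding.comp (isClosedEmbedding_smul_left hv)
  have hY0 : (0 : ℝ) ∈ g ⁻¹' P := by simpa [hg] using hx
  have hYc : IsCompact (g ⁻¹' P) := hgc.isCompact_preimage hP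
  have hYeq := eq_Icc_of_connected_compact ((hf.1.affine_preimage g).isConnected ⟨0, hY0⟩) hYc
  set a := sInf (g ⁻¹' P)
  set b := sSup (g ⁻¹' P)
  have h0ab : (0 : ℝ) ∈ Icc a b := hYeq ▸ hY0
  have hab : a ≤ b := h0ab.1.trans h0ab.2
  have hfront : ∀ c ∈ ({a, b} : Set ℝ), g c ∈ frontier P := fun c hc =>
    hgc.continuous.frontier_preimage_subset P (by rwa [hYeq, frontier_Icc hab])
  have hmax := (hf.comp_affineMap g).le_on_segment (hYeq ▸ left_mem_Icc.mpr hab)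
    (hYeq ▸ right_mem_Icc.mpr hab) (segment_eq_Icc hab ▸ h0ab)
  simp only [Function.comp_apply, le_max_iff] at hmax
  rcases hmax with h | h
  · exact ⟨a, hg a ▸ hfront a (by simp), by simpa [hg] using h⟩
  · exact ⟨b, hg b ▸ hfront b (by simp), by simpa [hg] using h⟩

theorem volume_le_hausdorffMeasure_sq_of_forall_exists {S T : Set (ℝ × ℝ)}
    (hvert : ∀ p ∈ S, ∃ y, (p.1, y) ∈ T) (hhor : ∀ p ∈ S, ∃ x, (x, p.2) ∈ T) :
    volume S ≤ μH[1] T ^ 2 := by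
  have hS : S ⊆ (Prod.fst '' T) ×ˢ (Prod.snd '' T) := fun p hp => by
    obtain ⟨y, hy⟩ := hvert p hp
    obtain ⟨x, hx⟩ := hhor p hp
    exact ⟨⟨_, hy, rfl⟩, ⟨_, hx, rfl⟩⟩
  have hfst : volume (Prod.fst '' T) ≤ μH[1] T := by
    simpa [hausdorffMeasure_real] using
      LipschitzWith.prod_fst.hausdorffMeasure_image_le zero_le_one T
  have hsnd : volume (Prod.snd '' T) ≤ μH[1] T := by
    simpa [hausdorffMeasure_real] using
      LipschitzWith.prod_snd.hausdorffMeasure_image_le zero_le_one T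
  calc volume S ≤ volume ((Prod.fst '' T) ×ˢ (Prod.snd '' T)) := measure_mono hS
    _ = volume (Prod.fst '' T) * volume (Prod.snd '' T) := by
      rw [Measure.volume_eq_prod, Measure.prod_prod]
    _ ≤ μH[1] T ^ 2 := by rw [sq]; gcongr

theorem ConvexOn.volume_superlevelSet_le {P : Set (ℝ × ℝ)} {f : ℝ × ℝ → ℝ} (hP : IsCompact P)
    (hf : ConvexOn ℝ P f) (t : ℝ) :
    volume ({p | t < f p} ∩ P) ≤ μH[1] ({p | t < f p} ∩ frontier P) ^ 2 := by
  refine volume_le_hausdorffMeasure_sq_of_forall_exists (fun ⟨x, y⟩ ⟨hpt, hpP⟩ => ?_)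
    (fun ⟨x, y⟩ ⟨hpt, hpP⟩ => ?_)
  · obtain ⟨s, hs, hle⟩ := hf.exists_add_smul_mem_frontier_le hP hpP (v := (0, 1)) (by simp)
    exact ⟨y + s, by simpa using And.intro (hpt.trans_le hle) hs⟩
  · obtain ⟨s, hs, hle⟩ := hf.exists_add_smul_mem_frontier_le hP hpP (v := (1, 0)) (by simp)
    exact ⟨x + s, by simpa using And.intro (hpt.trans_le hle) hs⟩

section LayerCake

variable {α : Type*} [MeasurableSpace α] {μ ν : Measure α} {f : α → ℝ}

/-- By Chebyshev, `t ν{f > t} ≤ ∫ f dν`, so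
`∫ f² dμ = ∫ 2t μ{f > t} dt ≤ ∫ 2t ν{f > t}² dt ≤ 2 (∫ f dν) ∫ ν{f > t} dt = 2 (∫ f dν)²`. -/
theorem lintegral_sq_le_two_mul_sq_of_meas_lt_le (hμ : 0 ≤ᵐ[μ] f) (hμm : AEMeasurable f μ)
    (hν : 0 ≤ᵐ[ν] f) (hνm : AEMeasurable f ν)
    (h : ∀ t, 0 < t → μ {a | t < f a} ≤ ν {a | t < f a} ^ 2) :
    ∫⁻ a, ENNReal.ofReal (f a ^ 2) ∂μ ≤ 2 * (∫⁻ a, ENNReal.ofReal (f a) ∂ν) ^ 2 := by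
  set B := ∫⁻ a, ENNReal.ofReal (f a) ∂ν
  set σ : ℝ → ℝ≥0∞ := fun t => ν {a | t < f a}
  have hσ : Measurable σ := Antitone.measurable fun s t hst =>
    measure_mono fun a (ha : t < f a) => hst.trans_lt ha
  have hcheb : ∀ t, ENNReal.ofReal t * σ t ≤ B := fun t =>
    calc ENNReal.ofReal t * σ t
        ≤ ENNReal.ofReal t * ν {a | ENNReal.ofReal t ≤ ENNReal.ofReal (f a)} := by
          gcongr ENNReal.ofReal t * ν ?_
          exact fun a (ha : t < f a) => ENNReal.ofReal_le_ofReal ha.le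
      _ ≤ B := mul_meas_ge_le_lintegral₀ hνm.ennreal_ofReal _
  have hpt : ∀ t ∈ Ioi (0 : ℝ),
      μ {a | t < f a} * ENNReal.ofReal (t ^ ((2 : ℝ) - 1)) ≤ B * σ t := fun t ht =>
    calc μ {a | t < f a} * ENNReal.ofReal (t ^ ((2 : ℝ) - 1))
        ≤ σ t ^ 2 * ENNReal.ofReal t := by
          rw [show (2 : ℝ) - 1 = 1 by norm_num, Real.rpow_one]
          gcongr
          exact h t ht
      _ = σ t * (ENNReal.ofReal t * σ t) := by ring
      _ ≤ σ t * B := by gcongr; exact hcheb t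
      _ = B * σ t := mul_comm _ _
  calc ∫⁻ a, ENNReal.ofReal (f a ^ 2) ∂μ = ∫⁻ a, ENNReal.ofReal (f a ^ (2 : ℝ)) ∂μ := by
        simp_rw [Real.rpow_two]
    _ = ENNReal.ofReal 2 *
          ∫⁻ t in Ioi 0, μ {a | t < f a} * ENNReal.ofReal (t ^ ((2 : ℝ) - 1)) :=
        lintegral_rpow_eq_lintegral_meas_lt_mul μ hμ hμm two_pos
    _ ≤ ENNReal.ofReal 2 * ∫⁻ t in Ioi 0, B * σ t := by
        gcongr ENNReal.ofReal 2 * ?_; exact setLIntegral_mono' measurableSet_Ioi hpt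
    _ = 2 * B ^ 2 := by
        rw [lintegral_const_mul _ hσ, ← lintegral_eq_lintegral_meas_lt ν hν hνm]
        rw [ENNReal.ofReal_ofNat]
        ring

theorem sqrt_integral_sq_le_of_meas_lt_le (hμ : 0 ≤ᵐ[μ] f) (hμm : AEMeasurable f μ)
    (hν : 0 ≤ᵐ[ν] f) (hνi : Integrable f ν)
    (h : ∀ t, 0 < t → μ {a | t < f a} ≤ ν {a | t < f a} ^ 2) :
    √(∫ a, f a ^ 2 ∂μ) ≤ √2 * ∫ a, f a ∂ν := by
  have hB := hνi.lintegral_lt_top.ne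
  rw [integral_eq_lintegral_of_nonneg_ae (ae_of_all _ fun a => sq_nonneg (f a))
      (hμm.pow_const 2).aestronglyMeasurable,
    integral_eq_lintegral_of_nonneg_ae hν hνi.aestronglyMeasurable]
  calc √(∫⁻ a, ENNReal.ofReal (f a ^ 2) ∂μ).toReal
      ≤ √(2 * (∫⁻ a, ENNReal.ofReal (f a) ∂ν) ^ 2).toReal := by
        gcongr
        · finiteness
        · exact lintegral_sq_le_two_mul_sq_of_meas_lt_le hμ hμm hν hνi.aemeasurable h
    _ = √2 * (∫⁻ a, ENNReal.ofReal (f a) ∂ν).toReal := by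
        rw [ENNReal.toReal_mul, ENNReal.toReal_pow, ENNReal.toReal_ofNat,
          Real.sqrt_mul zero_le_two, Real.sqrt_sq ENNReal.toReal_nonneg]

end LayerCake

theorem ConvexOn.sqrt_integral_sq_le {P : Set (ℝ × ℝ)} {f : ℝ × ℝ → ℝ} (hP : IsCompact P)
    (hσ : μH[1] (frontier P) ≠ ∞) (hfc : ContinuousOn f P) (hf : ConvexOn ℝ P f)
    (hf0 : ∀ p ∈ P, 0 ≤ f p) :
    √(∫ p in P, f p ^ 2) ≤ √2 * ∫ p in frontier P, f p ∂μH[1] := by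
  have hPm : MeasurableSet P := hP.isClosed.measurableSet
  have hFm : MeasurableSet (frontier P) := isClosed_frontier.measurableSet
  have hFP : frontier P ⊆ P := hP.isClosed.frontier_subset
  have : IsFiniteMeasure (μH[1].restrict (frontier P)) := isFiniteMeasure_restrict.mpr hσ
  obtain ⟨M, hM⟩ := (hP.of_isClosed_subset isClosed_frontier hFP).exists_bound_of_continuousOn
    (hfc.mono hFP)
  refine sqrt_integral_sq_le_of_meas_lt_le ((ae_restrict_iff' hPm).mpr (ae_of_all _ hf0))
    (hfc.aemeasurable hPm)
    ((ae_restrict_iff' hFm).mpr (ae_of_all _ fun p hp => hf0 p (hFP hp)))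
    (Integrable.of_bound ((hfc.mono hFP).aestronglyMeasurable hFm) M
      ((ae_restrict_iff' hFm).mpr (ae_of_all _ hM)))
    fun t _ => ?_
  rw [Measure.restrict_apply' hPm, Measure.restrict_apply' hFm]
  exact hf.volume_superlevelSet_le hP t

theorem stmt_2 (V : Finset (ℝ × ℝ)) (P : Set (ℝ × ℝ))
    (hP : P = convexHull ℝ (V : Set (ℝ × ℝ))) :
    ∃ C : ℝ, 0 < C ∧ ∀ f : ℝ × ℝ → ℝ,
      ContinuousOn f P → ConvexOn ℝ P f → (∀ p ∈ P, 0 ≤ f p) →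
      Real.sqrt (∫ p in P, (f p) ^ 2) ≤ C * ∫ p in frontier P, f p ∂(μH[1]) := by
  subst hP
  refine ⟨√2, by positivity, fun f hfc hf hf0 => hf.sqrt_integral_sq_le
    (V.finite_toSet.isCompact_convexHull ℝ) ?_ hfc hf0⟩
  exact (hausdorffMeasure_frontier_convexHull_lt_top (by simp) V).ne
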